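/- The vertex-appending differential squares to zero: ∂^{n+1} ∘ ∂^n = 0 for every n ≥ 0, so (C^•, ∂) is a cochain complex. -/
import Mathlib


/-! Core definitions for (edge-labeled) `m`-bonsais, following Byun,
"A Generalization of Connes-Kreimer Hopf Algebra".

An `m`-bonsai is a finite rooted tree in which every vertex has at most `m`
children and the edges from a vertex to its children carry pairwise distinct
labels from `{1, …, m}` (here modeled by `Fin m`).  We encode such a tree by
its (finite, prefix-closed) set of vertex-addresses: the address of a vertex
is the list of edge labels on the path from the root to it.  This encoding
builds in both the arity bound and the distinctness of sibling labels. -/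

open scoped Classical TensorProduct

structure Bonsai (m : ℕ) where
  verts : Finset (List (Fin m))
  root_mem : ([] : List (Fin m)) ∈ verts
  prefix_closed : ∀ ⦃p q : List (Fin m)⦄, p ∈ verts → q <+: p → q ∈ verts

namespace Bonsai

variable {m : ℕ}

theorem ext' {T U : Bonsai m} (h : T.verts = U.verts) : T = U := by
  cases T; cases U; simp_all

/-- The one-vertex bonsai. -/
def point (m : ℕ) : Bonsai m where
  verts := {[]}
  root_mem := by simp
  prefix_closed := by
    intro p q hp hq
    simp only [Finset.mem_singleton] at hp ⊢
    subst hp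
    exact List.prefix_nil.mp hq

/-- `deg T` is the number of vertices of `T`. -/
def deg (T : Bonsai m) : ℕ := T.verts.card

/-- The subtree of `T` rooted at the vertex (address) `e`. -/
noncomputable def subtreeAt (T : Bonsai m) (e : List (Fin m)) : Bonsai m where
  verts := insert [] ((T.verts.filter (fun p => e <+: p)).image (fun p => p.drop e.length))
  root_mem := by simp
  prefix_closed := by
    intro p q hp hq
    simp only [Finset.mem_insert, Finset.mem_image, Finset.mem_filter] at hp ⊢
    rcases hp with rfl | ⟨r, ⟨hr, her⟩, rfl⟩
    · left; exact List.prefix_nil.mp hq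
    · right
      refine ⟨e ++ q, ⟨T.prefix_closed hr ?_, List.prefix_append e q⟩, by simp⟩
      have : e ++ q <+: e ++ r.drop e.length := (List.prefix_append_right_inj e).mpr hq
      rwa [List.prefix_iff_eq_append.mp her] at this

/-- The set of simple cuts of `T` (including the empty cut).  A simple cut is a
set of edges (an edge is recorded by the address of its child endpoint, hence a
nonempty vertex address) no two of which lie on a common path to the root. -/
noncomputable def cutsSet (T : Bonsai m) : Finset (Finset (List (Fin m))) :=
  (T.verts.erase []).powerset.filter
    (fun c => ∀ e ∈ c, ∀ e' ∈ c, e <+: e' → e = e')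

/-- `R_c(T)`: the trunk (the part containing the root) left after the simple cut `c`. -/
noncomputable def trunk (T : Bonsai m) (c : Finset (List (Fin m))) : Bonsai m where
  verts := insert [] (T.verts.filter (fun p => ∀ e ∈ c, ¬ e <+: p))
  root_mem := by simp
  prefix_closed := by
    intro p q hp hq
    simp only [Finset.mem_insert, Finset.mem_filter] at hp ⊢
    rcases hp with rfl | ⟨hp, hc⟩
    · left; exact List.prefix_nil.mp hq
    · right
      exact ⟨T.prefix_closed hp hq, fun e he hel => hc e he (hel.trans hq)⟩

/-- `P_c(T)`: the forest (multiset) of branches cut off by the simple cut `c`. -/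
noncomputable def branches (T : Bonsai m) (c : Finset (List (Fin m))) :
    Multiset (Bonsai m) := c.val.map T.subtreeAt

end Bonsai

namespace Bonsai

variable {m : ℕ}

/-- Rebuild a bonsai from a raw vertex set (returning the one-vertex bonsai on
junk input; by proof irrelevance this is harmless). -/
noncomputable def mkBonsai (s : Finset (List (Fin m))) : Bonsai m :=
  if h : ([] : List (Fin m)) ∈ s ∧ (∀ ⦃p q : List (Fin m)⦄, p ∈ s → q <+: p → q ∈ s)
  then ⟨s, h.1, h.2⟩ else point m

/-- The number of edges of `T`. -/
def numEdges (T : Bonsai m) : ℕ := T.deg - 1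

/-- The number of children of the vertex `v` in the raw vertex set `s`. -/
noncomputable def rawChildren (s : Finset (List (Fin m))) (v : List (Fin m)) : ℕ :=
  (Finset.univ.filter (fun l : Fin m => v ++ [l] ∈ s)).card

/-- The number of branching vertices (vertices with at least two children) of
the raw vertex set `s`. -/
noncomputable def rawBranchCount (s : Finset (List (Fin m))) : ℕ :=
  (s.filter (fun v => 2 ≤ rawChildren s v)).card

end Bonsai

namespace Bonsai
variable {m : ℕ}

/-- The labels `ℓ` admissible at the vertex `v` of `T` (no child edge of `v` is
labeled `ℓ`). -/
noncomputable def admissible (T : Bonsai m) (v : List (Fin m)) : Finset (Fin m) :=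
  Finset.univ.filter (fun l => v ++ [l] ∉ T.verts)

/-- A vertex of `T` is a tip iff it is incident to exactly one edge and is not
the root, or `T` is the one-vertex bonsai; equivalently, iff it has no
children. -/
noncomputable def nonTips (T : Bonsai m) : Finset (List (Fin m)) :=
  T.verts.filter (fun v => ∃ l : Fin m, v ++ [l] ∈ T.verts)

end Bonsai

section VertexAppending

variable (k : Type) [Field k] (m : ℕ)

abbrev BonsaiMod (k : Type) [Field k] (m : ℕ) := Bonsai m →₀ k

/-- The vertex-appending differential on a determinanted bonsai:
`∂(T ⊗ det T) = Σ T' ⊗ e ∧ det T`, summed over all bonsais `T'` obtained from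
`T` by attaching one new edge `e` with an admissible label to a vertex of `T`
which is not a tip; `e ∧ det T` is re-expressed in the traversing order of `T'`
(the lexicographic order of edge addresses) using the sign rule. -/
noncomputable def vaVal (T : Bonsai m) : BonsaiMod k m :=
  ∑ v ∈ Bonsai.nonTips T, ∑ l ∈ Bonsai.admissible T v,
    ((-1 : k) ^ (((T.verts.erase []).filter (fun q => q < v ++ [l])).card))
      • Finsupp.single (Bonsai.mkBonsai (insert (v ++ [l]) T.verts)) 1

/-- The vertex-appending differential, extended linearly. -/
noncomputable def vaMap : BonsaiMod k m →ₗ[k] BonsaiMod k m :=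
  Finsupp.lsum k (fun T => LinearMap.toSpanSingleton k (BonsaiMod k m) (vaVal k m T))

end VertexAppending


section DSquaredAux

open Bonsai Finset

variable {m : ℕ}

/-- The address of the new edge determined by an attachment datum. -/
def ee (p : (_ : List (Fin m)) × Fin m) : List (Fin m) := p.1 ++ [p.2]

lemma ee_ne_nil (p : (_ : List (Fin m)) × Fin m) : ee p ≠ [] := by
  simp [ee]

lemma ee_inj {p q : (_ : List (Fin m)) × Fin m} (h : ee p = ee q) : p = q := by
  obtain ⟨h1, h2⟩ := List.append_inj' h rfl
  obtain ⟨a, b⟩ := p; obtain ⟨c, d⟩ := q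
  simp_all [ee]

/-- The set of attachment data for `T`. -/
noncomputable def idx (T : Bonsai m) : Finset ((_ : List (Fin m)) × Fin m) :=
  (Bonsai.nonTips T).sigma (fun v => Bonsai.admissible T v)

lemma mem_idx {T : Bonsai m} {p : (_ : List (Fin m)) × Fin m} :
    p ∈ idx T ↔ p.1 ∈ Bonsai.nonTips T ∧ ee p ∉ T.verts := by
  obtain ⟨a, b⟩ := p
  simp [idx, Bonsai.admissible, ee]

lemma verts_att {T : Bonsai m} {p : (_ : List (Fin m)) × Fin m} (hp : p ∈ idx T) :
    (Bonsai.mkBonsai (insert (ee p) T.verts)).verts = insert (ee p) T.verts := by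
  obtain ⟨hv, -⟩ := mem_idx.1 hp
  have hvT : p.1 ∈ T.verts := (Finset.mem_filter.1 hv).1
  rw [Bonsai.mkBonsai, dif_pos]
  refine ⟨Finset.mem_insert_of_mem T.root_mem, ?_⟩
  intro a b ha hb
  rcases Finset.mem_insert.1 ha with rfl | ha
  · rcases List.prefix_concat_iff.1 hb with rfl | hb
    · exact Finset.mem_insert_self _ _
    · exact Finset.mem_insert_of_mem (T.prefix_closed hvT hb)
  · exact Finset.mem_insert_of_mem (T.prefix_closed ha hb)

lemma nonTips_att {T : Bonsai m} {p : (_ : List (Fin m)) × Fin m} (hp : p ∈ idx T) :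
    Bonsai.nonTips (Bonsai.mkBonsai (insert (ee p) T.verts)) = Bonsai.nonTips T := by
  obtain ⟨hv, he⟩ := mem_idx.1 hp
  ext u
  simp only [Bonsai.nonTips, Finset.mem_filter, verts_att hp, Finset.mem_insert]
  constructor
  · rintro ⟨hu | hu, l', hl' | hl'⟩
    · exact absurd (congrArg List.length hl') (by subst hu; simp)
    · exact absurd (T.prefix_closed hl' (by subst hu; exact List.prefix_append _ _)) (by subst hu; exact he)
    · obtain ⟨h2, -⟩ := List.append_inj' hl' rfl
      subst h2
      exact ⟨hu, (Finset.mem_filter.1 hv).2⟩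
    · exact ⟨hu, l', hl'⟩
  · rintro ⟨hu, l', hl'⟩
    exact ⟨Or.inr hu, l', Or.inr hl'⟩

lemma idx_att {T : Bonsai m} {p : (_ : List (Fin m)) × Fin m} (hp : p ∈ idx T) :
    idx (Bonsai.mkBonsai (insert (ee p) T.verts)) = (idx T).erase p := by
  obtain ⟨-, he⟩ := mem_idx.1 hp
  ext q
  rw [Finset.mem_erase, mem_idx, nonTips_att hp, verts_att hp, mem_idx]
  simp only [Finset.mem_insert]
  constructor
  · rintro ⟨h1, h2⟩
    push_neg at h2
    exact ⟨fun h => h2.1 (congrArg ee h.symm ▸ rfl), h1, h2.2⟩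
  · rintro ⟨hne, h1, h2⟩
    refine ⟨h1, ?_⟩
    push_neg
    exact ⟨fun h => hne (ee_inj h), h2⟩

lemma sign_att {T : Bonsai m} {p : (_ : List (Fin m)) × Fin m} (hp : p ∈ idx T)
    {b : List (Fin m)} (hb : ee p ≠ b) :
    ((((insert (ee p) T.verts).erase []).filter (fun q => q < b)).card : ℕ)
      = ((T.verts.erase []).filter (fun q => q < b)).card + (if ee p < b then 1 else 0) := by
  obtain ⟨-, he⟩ := mem_idx.1 hp
  rw [Finset.erase_insert_of_ne (ee_ne_nil p), Finset.filter_insert]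
  by_cases h : ee p < b
  · rw [if_pos h, if_pos h, Finset.card_insert_of_notMem]
    intro hmem
    exact he (Finset.mem_of_mem_erase (Finset.mem_of_mem_filter _ hmem))
  · rw [if_neg h, if_neg h, add_zero]

variable (k : Type) [Field k]

lemma vaVal_sigma (T : Bonsai m) :
    vaVal k m T = ∑ p ∈ idx T,
      ((-1 : k) ^ (((T.verts.erase []).filter (fun q => q < ee p)).card))
        • Finsupp.single (Bonsai.mkBonsai (insert (ee p) T.verts)) 1 := by
  rw [vaVal, Finset.sum_sigma']
  rfl

lemma vaVal_att {T : Bonsai m} {p : (_ : List (Fin m)) × Fin m} (hp : p ∈ idx T) :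
    vaVal k m (Bonsai.mkBonsai (insert (ee p) T.verts))
      = ∑ q ∈ (idx T).erase p,
          ((-1 : k) ^ (((T.verts.erase []).filter (fun r => r < ee q)).card
              + (if ee p < ee q then 1 else 0)))
            • Finsupp.single
                (Bonsai.mkBonsai (insert (ee q) (insert (ee p) T.verts))) 1 := by
  rw [vaVal_sigma, idx_att hp]
  refine Finset.sum_congr rfl (fun q hq => ?_)
  have hqp : q ≠ p := (Finset.mem_erase.1 hq).1
  have hee : ee p ≠ ee q := fun h => hqp (ee_inj h.symm)
  rw [verts_att hp, sign_att hp hee]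

end DSquaredAux

/-- **STATEMENT 10.** The vertex-appending differential squares to zero:
`∂^{n+1} ∘ ∂^n = 0`, so `(C^•, ∂)` is a cochain complex. -/
theorem vertexAppending_d_squared (k : Type) [Field k] (m : ℕ) :
    (vaMap k m).comp (vaMap k m) = 0 := by
  apply Finsupp.lhom_ext
  intro T c
  suffices h : (vaMap k m) (vaVal k m T) = 0 by
    have h1 : (vaMap k m) (Finsupp.single T c) = c • vaVal k m T := by
      rw [vaMap, Finsupp.lsum_single, LinearMap.toSpanSingleton_apply]
    simp only [LinearMap.comp_apply, LinearMap.zero_apply, h1, map_smul, h, smul_zero]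
  rw [vaVal_sigma, map_sum]
  have step : ∀ p ∈ idx T,
      (vaMap k m) (((-1 : k) ^ (((T.verts.erase []).filter (fun q => q < ee p)).card)) •
        Finsupp.single (Bonsai.mkBonsai (insert (ee p) T.verts)) 1)
      = ∑ q ∈ (idx T).erase p,
          ((-1 : k) ^ (((T.verts.erase []).filter (fun r => r < ee p)).card
            + (((T.verts.erase []).filter (fun r => r < ee q)).card
              + (if ee p < ee q then 1 else 0))))
            • Finsupp.single
                (Bonsai.mkBonsai (insert (ee q) (insert (ee p) T.verts))) 1 := by
    intro p hp
    rw [map_smul, vaMap, Finsupp.lsum_single, LinearMap.toSpanSingleton_apply, one_smul,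
      vaVal_att k hp, Finset.smul_sum]
    refine Finset.sum_congr rfl (fun q hq => ?_)
    rw [smul_smul, ← pow_add]
  rw [Finset.sum_congr rfl step, Finset.sum_sigma']
  refine Finset.sum_involution (fun z _ => ⟨z.2, z.1⟩) ?_ ?_ ?_ ?_
  · intro z hz
    obtain ⟨hz1, hz2⟩ := Finset.mem_sigma.1 hz
    have hne : z.2 ≠ z.1 := (Finset.mem_erase.1 hz2).1
    have heene : ee z.1 ≠ ee z.2 := fun hc => hne (ee_inj hc.symm)
    simp only
    rw [Finset.insert_comm (ee z.2) (ee z.1), ← add_smul]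
    rcases lt_or_gt_of_ne heene with hlt | hlt
    · rw [if_pos hlt, if_neg (asymm hlt)]
      rw [show ((-1 : k) ^ (((T.verts.erase []).filter (fun r => r < ee z.1)).card
            + (((T.verts.erase []).filter (fun r => r < ee z.2)).card + 1))
          + (-1 : k) ^ (((T.verts.erase []).filter (fun r => r < ee z.2)).card
            + (((T.verts.erase []).filter (fun r => r < ee z.1)).card + 0))) = 0 by
        simp only [pow_add, pow_succ, pow_zero]
        ring]
      rw [zero_smul]
    · rw [if_neg (asymm hlt), if_pos hlt]
      rw [show ((-1 : k) ^ (((T.verts.erase []).filter (fun r => r < ee z.1)).card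
            + (((T.verts.erase []).filter (fun r => r < ee z.2)).card + 0))
          + (-1 : k) ^ (((T.verts.erase []).filter (fun r => r < ee z.2)).card
            + (((T.verts.erase []).filter (fun r => r < ee z.1)).card + 1))) = 0 by
        simp only [pow_add, pow_succ, pow_zero]
        ring]
      rw [zero_smul]
  · intro z hz _
    have hne : z.2 ≠ z.1 := (Finset.mem_erase.1 (Finset.mem_sigma.1 hz).2).1
    exact fun hc => hne (congrArg Sigma.fst hc)
  · intro z hz
    obtain ⟨hz1, hz2⟩ := Finset.mem_sigma.1 hz
    obtain ⟨hne, hz2'⟩ := Finset.mem_erase.1 hz2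
    exact Finset.mem_sigma.2 ⟨hz2', Finset.mem_erase.2 ⟨fun hc => hne hc.symm, hz1⟩⟩
  · intro z hz
    rfl
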